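/- arXiv:1505.04121 — 6 statements merged into one kernel-verified Lean document; each statement's English description precedes it below -/
import Mathlib

section
/- The limit of q at the origin exists and equals L through all nonzero points if and only if it exists and equals L along the real discriminant set. Precisely: Tendsto q (𝓝[{v : v ≠ O}] O) (𝓝 L) if and only if Tendsto q (𝓝[X(q)_ℝ \ {O}] O) (𝓝 L). -/
/-!
On every sphere of small radius around the origin `g` has no zero, so `q` is continuous there and
attains its maximum and its minimum. At such an extremum `v`, Lagrange multipliers make the
gradient of `f / g` parallel to `v`, so the cross product `v × (g ∇f - f ∇g)` vanishes; its
components are the polynomials `f_{xᵢ,xⱼ}`, hence `v ∈ X(q)_ℝ`. Every value of `q` on the sphere is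
therefore squeezed between two values taken on `X(q)_ℝ` at the same distance from the origin.
-/

open MvPolynomial Filter Topology

/-- The quotient `q(v) = f(v)/g(v)`, with the convention `q(v) = 0` when `g(v) = 0`
(Lean's division by zero). -/
noncomputable def quotFun (f g : MvPolynomial (Fin 3) ℝ) (v : EuclideanSpace ℝ (Fin 3)) : ℝ :=
  eval v f / eval v g

/-- The polynomial `f_{xᵢ,xⱼ} = xᵢ(g ∂f/∂xⱼ − f ∂g/∂xⱼ) − xⱼ(g ∂f/∂xᵢ − f ∂g/∂xᵢ)`. -/
noncomputable def minorPoly (f g : MvPolynomial (Fin 3) ℝ) (i j : Fin 3) :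
    MvPolynomial (Fin 3) ℝ :=
  X i * (g * pderiv j f - f * pderiv j g) - X j * (g * pderiv i f - f * pderiv i g)

/-- The real discriminant set `X(q)_ℝ` : common real zeros of the three minor polynomials. -/
noncomputable def discrimSet (f g : MvPolynomial (Fin 3) ℝ) : Set (EuclideanSpace ℝ (Fin 3)) :=
  {v | eval v (minorPoly f g 0 1) = 0 ∧ eval v (minorPoly f g 0 2) = 0 ∧
       eval v (minorPoly f g 1 2) = 0}

open Metric

theorem IsLocalExtrOn.exists_eq_smul_innerSL_of_sphere {E : Type*} [NormedAddCommGroup E]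
    [InnerProductSpace ℝ E] [CompleteSpace E] {φ : E → ℝ} {φ' : StrongDual ℝ E} {v : E}
    (hv : v ≠ 0) (hextr : IsLocalExtrOn φ (sphere 0 ‖v‖) v) (hφ : HasStrictFDerivAt φ φ' v) :
    ∃ c : ℝ, φ' = c • innerSL ℝ v := by
  have hlevel : sphere (0 : E) ‖v‖ = {w | ‖w‖ ^ 2 = ‖v‖ ^ 2} := by
    ext w; simp
  rw [hlevel] at hextr
  obtain ⟨a, b, hab, hmult⟩ :=
    hextr.exists_multipliers_of_hasStrictFDerivAt_1d (hasStrictFDerivAt_norm_sq v) hφ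
  have hb : b ≠ 0 := by
    rintro rfl
    have ha : a ≠ 0 := fun ha => hab (by simp [ha])
    have := congr($hmult v)
    simp [ha, hv] at this
  refine ⟨-(2 * a / b), ?_⟩
  ext w
  have := congr($hmult w)
  simp only [add_apply, smul_apply, smul_eq_mul, zero_apply] at this ⊢
  field_simp
  linear_combination this

theorem tendsto_nhdsNE_of_isExtrOn_sphere_mem {E : Type*} [NormedAddCommGroup E] [ProperSpace E]
    {q : E → ℝ} {D : Set E} {ε L : ℝ} (hε : 0 < ε)
    (hcont : ∀ r, 0 < r → r < ε → ContinuousOn q (sphere 0 r))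
    (hD : ∀ r, 0 < r → r < ε → ∀ v ∈ sphere (0 : E) r, IsExtrOn q (sphere 0 r) v → v ∈ D)
    (h : Tendsto q (𝓝[D \ {0}] 0) (𝓝 L)) : Tendsto q (𝓝[≠] 0) (𝓝 L) := by
  rw [Metric.tendsto_nhdsWithin_nhds] at h ⊢
  intro δ hδ
  obtain ⟨ρ, hρ, hqD⟩ := h δ hδ
  refine ⟨min ρ ε, lt_min hρ hε, fun v hv hvρ => ?_⟩
  rw [dist_zero_right, lt_min_iff] at hvρ
  set S := sphere (0 : E) ‖v‖
  have hr : 0 < ‖v‖ := norm_pos_iff.2 hv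
  have hvS : v ∈ S := by simp [S]
  have hclose : ∀ w ∈ S, IsExtrOn q S w → q w ∈ ball L δ := fun w hw hextr =>
    hqD ⟨hD _ hr hvρ.2 w hw hextr, ne_zero_of_mem_sphere hr.ne' ⟨w, hw⟩⟩
      (by rw [dist_zero_right, mem_sphere_zero_iff_norm.1 hw]; exact hvρ.1)
  obtain ⟨wmax, hwmax, hmax⟩ := (isCompact_sphere 0 ‖v‖).exists_isMaxOn ⟨v, hvS⟩ (hcont _ hr hvρ.2)
  obtain ⟨wmin, hwmin, hmin⟩ := (isCompact_sphere 0 ‖v‖).exists_isMinOn ⟨v, hvS⟩ (hcont _ hr hvρ.2)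
  have hmaxL := hclose wmax hwmax (.inr hmax)
  have hminL := hclose wmin hwmin (.inl hmin)
  rw [Real.ball_eq_Ioo] at hmaxL hminL
  rw [← mem_ball, Real.ball_eq_Ioo]
  exact Set.ordConnected_Ioo.out hminL hmaxL ⟨hmin hvS, hmax hvS⟩

namespace MvPolynomial

variable {σ : Type*} [Fintype σ] [DecidableEq σ]

noncomputable def fderivEval (p : MvPolynomial σ ℝ) (v : EuclideanSpace ℝ σ) :
    EuclideanSpace ℝ σ →L[ℝ] ℝ :=
  ∑ j, eval v (pderiv j p) • EuclideanSpace.proj j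

@[simp]
theorem fderivEval_single (p : MvPolynomial σ ℝ) (v : EuclideanSpace ℝ σ) (k : σ) :
    fderivEval p v (EuclideanSpace.single k 1) = eval v (pderiv k p) := by
  simp [fderivEval]

theorem hasStrictFDerivAt_eval (p : MvPolynomial σ ℝ) (v : EuclideanSpace ℝ σ) :
    HasStrictFDerivAt (fun w : EuclideanSpace ℝ σ => eval w p) (fderivEval p v) v := by
  induction p using MvPolynomial.induction_on with
  | C a =>
    simpa [fderivEval] using hasStrictFDerivAt_const a v
  | add p q hp hq =>
    simp only [eval_add]
    exact (hp.add hq).congr_fderiv (by simp [fderivEval, Finset.sum_add_distrib, add_smul])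
  | mul_X p i hp =>
    simp only [eval_mul, eval_X]
    refine (hp.mul (EuclideanSpace.proj i).hasStrictFDerivAt).congr_fderiv ?_
    ext w
    simp [fderivEval, pderiv_X, Pi.single_apply, mul_add, Finset.sum_add_distrib, Finset.mul_sum,
      apply_ite (eval _), mul_left_comm, mul_comm]

theorem hasStrictFDerivAt_eval_div (f g : MvPolynomial σ ℝ) {v : EuclideanSpace ℝ σ}
    (hg : eval v g ≠ 0) :
    HasStrictFDerivAt (fun w : EuclideanSpace ℝ σ => eval w f / eval w g)
      ((eval v g ^ 2)⁻¹ • (eval v g • fderivEval f v - eval v f • fderivEval g v)) v := by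
  have hinv := (hasStrictDerivAt_inv hg).comp_hasStrictFDerivAt v (hasStrictFDerivAt_eval g v)
  simp only [div_eq_mul_inv]
  refine ((hasStrictFDerivAt_eval f v).mul hinv).congr_fderiv ?_
  ext w
  simp only [smul_apply, sub_apply, add_apply, smul_eq_mul, Function.comp_apply]
  field_simp
  ring

theorem eval_cross_eq_zero_of_isLocalExtrOn_sphere (f g : MvPolynomial σ ℝ)
    {v : EuclideanSpace ℝ σ} (hv : v ≠ 0) (hg : eval v g ≠ 0)
    (hextr : IsLocalExtrOn (fun w : EuclideanSpace ℝ σ => eval w f / eval w g) (sphere 0 ‖v‖) v)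
    (i j : σ) :
    eval v (X i * (g * pderiv j f - f * pderiv j g) - X j * (g * pderiv i f - f * pderiv i g))
      = 0 := by
  obtain ⟨c, hc⟩ := hextr.exists_eq_smul_innerSL_of_sphere hv (hasStrictFDerivAt_eval_div f g hg)
  have hgrad : ∀ k, eval v (g * pderiv k f - f * pderiv k g) = c * eval v g ^ 2 * v k := by
    intro k
    have := congr($hc (EuclideanSpace.single k 1))
    simp only [smul_apply, sub_apply, smul_eq_mul, fderivEval_single, innerSL_apply_apply,
      EuclideanSpace.inner_single_right, conj_trivial] at this
    simp only [eval_sub, eval_mul]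
    field_simp at this
    linear_combination this
  simp only [eval_sub, eval_mul, eval_X] at hgrad ⊢
  rw [hgrad i, hgrad j]
  ring

end MvPolynomial

theorem mem_discrimSet_of_isLocalExtrOn_sphere (f g : MvPolynomial (Fin 3) ℝ)
    {v : EuclideanSpace ℝ (Fin 3)} (hv : v ≠ 0) (hg : eval v g ≠ 0)
    (hextr : IsLocalExtrOn (quotFun f g) (sphere 0 ‖v‖) v) : v ∈ discrimSet f g :=
  ⟨eval_cross_eq_zero_of_isLocalExtrOn_sphere f g hv hg hextr 0 1,
    eval_cross_eq_zero_of_isLocalExtrOn_sphere f g hv hg hextr 0 2,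
    eval_cross_eq_zero_of_isLocalExtrOn_sphere f g hv hg hextr 1 2⟩

/-- The limit of `q` at the origin exists and equals `L` through all nonzero points iff it
exists and equals `L` along the real discriminant set. -/
theorem limit_iff_limit_along_discriminant (f g : MvPolynomial (Fin 3) ℝ)
    (hg : ∃ ε > 0, ∀ v ∈ Metric.ball (0 : EuclideanSpace ℝ (Fin 3)) ε, eval v g = 0 → v = 0)
    (L : ℝ) :
    Tendsto (quotFun f g) (𝓝[{v : EuclideanSpace ℝ (Fin 3) | v ≠ 0}] 0) (𝓝 L) ↔
      Tendsto (quotFun f g) (𝓝[discrimSet f g \ {0}] 0) (𝓝 L) := by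
  refine ⟨fun h => h.mono_left (nhdsWithin_mono _ fun v hv => hv.2), fun h => ?_⟩
  obtain ⟨ε, hε, hg⟩ := hg
  have hg_sphere : ∀ r, 0 < r → r < ε → ∀ w ∈ sphere (0 : EuclideanSpace ℝ (Fin 3)) r,
      eval w g ≠ 0 := fun r hr hrε w hw hgw =>
    ne_zero_of_mem_sphere hr.ne' ⟨w, hw⟩
      (hg w (mem_ball_zero_iff.2 (mem_sphere_zero_iff_norm.1 hw ▸ hrε)) hgw)
  refine tendsto_nhdsNE_of_isExtrOn_sphere_mem hε (fun r hr hrε w hw => ?_)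
    (fun r hr hrε v hv hextr => ?_) h
  · exact (hasStrictFDerivAt_eval_div f g (hg_sphere r hr hrε w hw)).continuousAt
      |>.continuousWithinAt
  · obtain rfl := mem_sphere_zero_iff_norm.1 hv
    exact mem_discrimSet_of_isLocalExtrOn_sphere f g (ne_zero_of_mem_sphere hr.ne' ⟨v, hv⟩)
      (hg_sphere _ hr hrε v hv) hextr.localize
end

section
/- Let r > 0 and let S_r = {v ∈ ℝ³ : ‖v‖ = r}; assume g(v) ≠ 0 for all v ∈ S_r. If p ∈ S_r and the restriction of q to S_r attains a maximum at p (IsMaxOn q S_r p) or a minimum at p (IsMinOn q S_r p), then p ∈ X(q)_ℝ, i.e., f_{x,y}(p) = f_{x,z}(p) = f_{y,z}(p) = 0. -/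
/-!
Rotating `p` in the `xᵢxⱼ`-plane gives a curve on the sphere through `p` with velocity
`pᵢ eⱼ - pⱼ eᵢ`. Restricted to this curve `q` has an extremum at `p`, so its derivative there
vanishes; by the quotient rule that derivative is `f_{xᵢ,xⱼ}(p) / g(p)²`.
-/

open MvPolynomial Filter Topology

namespace MvPolynomial

theorem hasDerivAt_eval_comp {σ 𝕜 : Type*} [Fintype σ] [NontriviallyNormedField 𝕜]
    (P : MvPolynomial σ 𝕜) {γ : 𝕜 → σ → 𝕜} {γ' : σ → 𝕜} {t : 𝕜}
    (hγ : ∀ k, HasDerivAt (fun s => γ s k) (γ' k) t) :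
    HasDerivAt (fun s => eval (γ s) P) (∑ k, eval (γ t) (pderiv k P) * γ' k) t := by
  classical
  induction P using MvPolynomial.induction_on with
  | C a =>
    simp only [eval_C, pderiv_C, map_zero, zero_mul, Finset.sum_const_zero]
    exact hasDerivAt_const t a
  | add P Q hP hQ =>
    simp only [map_add, add_mul, Finset.sum_add_distrib]
    exact hP.add hQ
  | mul_X P i hP =>
    simp only [map_mul, eval_X]
    refine (hP.mul (hγ i)).congr_deriv ?_
    simp only [Finset.sum_mul, Derivation.leibniz, pderiv_X, Pi.single_apply, smul_eq_mul,
      mul_ite, mul_one, mul_zero, map_add, apply_ite (eval (γ t)), map_zero, map_mul, eval_X,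
      add_mul, ite_mul, zero_mul, Finset.sum_add_distrib, Finset.sum_ite_eq, Finset.mem_univ,
      ↓reduceIte]
    rw [add_comm]
    exact congrArg _ (Finset.sum_congr rfl fun _ _ => by ring)

noncomputable def angularDeriv {σ R : Type*} [CommRing R] (i j : σ)
    (P : MvPolynomial σ R) : MvPolynomial σ R :=
  X i * pderiv j P - X j * pderiv i P

end MvPolynomial

section PlaneRotation

open Real

variable {ι : Type*} [DecidableEq ι]

noncomputable def planeRotation (i j : ι) (t : ℝ) (v : EuclideanSpace ℝ ι) :
    EuclideanSpace ℝ ι :=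
  WithLp.toLp 2 fun k =>
    if k = i then cos t * v i - sin t * v j
    else if k = j then sin t * v i + cos t * v j
    else v k

variable {i j : ι}

@[simp]
theorem planeRotation_zero (v : EuclideanSpace ℝ ι) : planeRotation i j 0 v = v := by
  ext k
  simp only [planeRotation, PiLp.toLp_apply, cos_zero, sin_zero]
  split_ifs <;> simp_all

theorem norm_planeRotation [Fintype ι] (hij : i ≠ j) (t : ℝ) (v : EuclideanSpace ℝ ι) :
    ‖planeRotation i j t v‖ = ‖v‖ := by
  suffices ‖planeRotation i j t v‖ ^ 2 = ‖v‖ ^ 2 by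
    simpa using congrArg Real.sqrt this
  rw [← sub_eq_zero, EuclideanSpace.real_norm_sq_eq, EuclideanSpace.real_norm_sq_eq,
    ← Finset.sum_sub_distrib, Fintype.sum_eq_add i j hij]
  · simp only [planeRotation, PiLp.toLp_apply, ↓reduceIte, hij.symm]
    linear_combination (v i ^ 2 + v j ^ 2) * sin_sq_add_cos_sq t
  · rintro k ⟨hki, hkj⟩
    simp [planeRotation, hki, hkj]

theorem hasDerivAt_planeRotation_apply (v : EuclideanSpace ℝ ι) (k : ι) :
    HasDerivAt (fun t => planeRotation i j t v k)
      (if k = i then -v j else if k = j then v i else 0) 0 := by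
  by_cases hki : k = i
  · subst hki
    simp only [planeRotation, PiLp.toLp_apply, if_pos]
    exact (((hasDerivAt_cos 0).mul_const (v k)).sub
      ((hasDerivAt_sin 0).mul_const (v j))).congr_deriv (by simp)
  by_cases hkj : k = j
  · subst hkj
    simp only [planeRotation, PiLp.toLp_apply, if_neg hki]
    exact (((hasDerivAt_sin 0).mul_const (v i)).add
      ((hasDerivAt_cos 0).mul_const (v k))).congr_deriv (by simp)
  simpa [planeRotation, hki, hkj] using hasDerivAt_const (0 : ℝ) (v k)

theorem hasDerivAt_eval_planeRotation [Fintype ι] (hij : i ≠ j) (P : MvPolynomial ι ℝ)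
    (v : EuclideanSpace ℝ ι) :
    HasDerivAt (fun t => eval (planeRotation i j t v) P) (eval v (P.angularDeriv i j)) 0 := by
  refine (P.hasDerivAt_eval_comp (hasDerivAt_planeRotation_apply v)).congr_deriv ?_
  rw [Fintype.sum_eq_add i j hij]
  · simp only [planeRotation_zero, ↓reduceIte, mul_neg, hij.symm, MvPolynomial.angularDeriv,
      map_sub, map_mul, eval_X]
    ring
  · rintro k ⟨hki, hkj⟩
    simp [hki, hkj]

end PlaneRotation

theorem IsExtrOn.eval_angularDeriv_quotient_numerator_eq_zero {ι : Type*} [Fintype ι]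
    [DecidableEq ι] {f g : MvPolynomial ι ℝ} {p : EuclideanSpace ℝ ι}
    (hext : IsExtrOn (fun v : EuclideanSpace ℝ ι => eval v f / eval v g) {v | ‖v‖ = ‖p‖} p)
    (hg : eval p g ≠ 0) {i j : ι} (hij : i ≠ j) :
    eval p (f.angularDeriv i j) * eval p g - eval p f * eval p (g.angularDeriv i j) = 0 := by
  have hcurve : IsLocalExtr
      (fun t => eval (planeRotation i j t p) f / eval (planeRotation i j t p) g) 0 :=
    (hext.comp_mapsTo (g := (planeRotation i j · p)) (t := Set.univ)
      (fun t _ => norm_planeRotation hij t p) (planeRotation_zero p)).isLocalExtr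
      univ_mem
  have hderiv := (hasDerivAt_eval_planeRotation hij f p).div
    (hasDerivAt_eval_planeRotation hij g p) (by simpa using hg)
  simp only [planeRotation_zero] at hderiv
  exact (div_eq_zero_iff.mp (hcurve.hasDerivAt_eq_zero hderiv)).resolve_right (pow_ne_zero 2 hg)

theorem minorPoly_eq (f g : MvPolynomial (Fin 3) ℝ) (i j : Fin 3) :
    minorPoly f g i j = f.angularDeriv i j * g - f * g.angularDeriv i j := by
  simp only [minorPoly, MvPolynomial.angularDeriv]
  ring

theorem mem_discrim_of_extremum_on_sphere_general (f g : MvPolynomial (Fin 3) ℝ) (r : ℝ)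
    (hg : ∀ v : EuclideanSpace ℝ (Fin 3), ‖v‖ = r → eval v g ≠ 0)
    (p : EuclideanSpace ℝ (Fin 3)) (hp : ‖p‖ = r)
    (hext : IsMaxOn (quotFun f g) {v : EuclideanSpace ℝ (Fin 3) | ‖v‖ = r} p ∨
            IsMinOn (quotFun f g) {v : EuclideanSpace ℝ (Fin 3) | ‖v‖ = r} p) :
    eval p (minorPoly f g 0 1) = 0 ∧ eval p (minorPoly f g 0 2) = 0 ∧
      eval p (minorPoly f g 1 2) = 0 := by
  subst hp
  have hminor : ∀ i j : Fin 3, i ≠ j → eval p (minorPoly f g i j) = 0 := fun i j hij => by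
    rw [minorPoly_eq, map_sub, map_mul, map_mul]
    exact IsExtrOn.eval_angularDeriv_quotient_numerator_eq_zero hext.symm (hg p rfl) hij
  exact ⟨hminor 0 1 (by decide), hminor 0 2 (by decide), hminor 1 2 (by decide)⟩

/-- If `g` does not vanish on the sphere of radius `r` and the restriction of `q` to this
sphere attains a maximum or a minimum at `p`, then `p` lies in the real discriminant set
`X(q)_ℝ`, i.e. the three minor polynomials vanish at `p`. -/
theorem mem_discrim_of_extremum_on_sphere (f g : MvPolynomial (Fin 3) ℝ) (r : ℝ) (hr : 0 < r)
    (hg : ∀ v : EuclideanSpace ℝ (Fin 3), ‖v‖ = r → eval v g ≠ 0)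
    (p : EuclideanSpace ℝ (Fin 3)) (hp : ‖p‖ = r)
    (hext : IsMaxOn (quotFun f g) {v : EuclideanSpace ℝ (Fin 3) | ‖v‖ = r} p ∨
            IsMinOn (quotFun f g) {v : EuclideanSpace ℝ (Fin 3) | ‖v‖ = r} p) :
    eval p (minorPoly f g 0 1) = 0 ∧ eval p (minorPoly f g 0 2) = 0 ∧
      eval p (minorPoly f g 1 2) = 0 :=
  mem_discrim_of_extremum_on_sphere_general f g r hg p hp hext
end

section
/- For every x ∈ K that is transcendental over k, the extension K over the intermediate field k⟮x⟯ generated by x is algebraic, and there exists y ∈ K such that K = k⟮x, y⟯, i.e., the intermediate field generated over k by {x, y} is all of K. -/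
/-!
Given `z ∈ K`, write `x` and `z` with a common denominator `s`, so both lie in `B = A[1/s]`,
a finitely generated `k`-domain of dimension `≤ 1`. The `k⟮x⟯`-algebra `C` generated by `B` is
the localisation of `B` at the nonzero polynomials in `x`, and it is a field: a nonzero prime of
`C` contracts to a nonzero, hence maximal, prime `p` of `B`; by Zariski's lemma `B/p` is finite
over `k`, so `p` contains a nonzero polynomial in `x`, which is a unit in `C`. Zariski's lemma
over `k⟮x⟯` then makes `C` finite over `k⟮x⟯`, so `z ∈ C` is algebraic. Finally `K` is finitely
generated and algebraic, hence finite and (in characteristic zero) separable, over `k⟮x⟯`, and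
the primitive element theorem gives `y`.
-/

open IntermediateField Polynomial

theorem ringKrullDim_le_of_isLocalization {R : Type*} [CommRing R] (M : Submonoid R)
    (S : Type*) [CommRing S] [Algebra R S] [IsLocalization M S] :
    ringKrullDim S ≤ ringKrullDim R :=
  Order.krullDim_le_of_strictMono (fun P ↦ ⟨P.asIdeal.under R, inferInstance⟩)
    fun _ _ h ↦ (IsLocalization.orderEmbedding M S).strictMono h

theorem exists_aeval_mem_of_isMaximal {k R : Type*} [Field k] [CommRing R] [Algebra k R]
    [Algebra.FiniteType k R] (m : Ideal R) [m.IsMaximal] (r : R) :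
    ∃ f : k[X], f ≠ 0 ∧ aeval r f ∈ m := by
  let := Ideal.Quotient.field m
  have : Module.Finite k (R ⧸ m) := finite_of_finite_type_of_isJacobsonRing k _
  obtain ⟨f, hf, hfr⟩ :=
    (Algebra.IsIntegral.isIntegral (R := k) (Ideal.Quotient.mkₐ k m r)).isAlgebraic
  refine ⟨f, hf, ?_⟩
  rwa [aeval_algHom_apply, Ideal.Quotient.mkₐ_eq_mk, Ideal.Quotient.eq_zero_iff_mem] at hfr

section

variable {k K : Type*} [Field k] [Field K] [Algebra k K]

theorem exists_mul_mem_of_mem_adjoin {L : IntermediateField k K} {B : Subalgebra k K}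
    (hL : ∀ l ∈ L, ∃ u ∈ B, u ≠ 0 ∧ l * u ∈ B) {c : K}
    (hc : c ∈ Algebra.adjoin L (B : Set K)) :
    ∃ u ∈ B, u ≠ 0 ∧ c * u ∈ B := by
  induction hc using Algebra.adjoin_induction with
  | mem c hc => exact ⟨1, one_mem B, one_ne_zero, by rwa [mul_one]⟩
  | algebraMap l => exact hL l l.2
  | add c₁ c₂ _ _ ih₁ ih₂ =>
    obtain ⟨u₁, hu₁, hu₁0, hcu₁⟩ := ih₁
    obtain ⟨u₂, hu₂, hu₂0, hcu₂⟩ := ih₂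
    refine ⟨u₁ * u₂, mul_mem hu₁ hu₂, mul_ne_zero hu₁0 hu₂0, ?_⟩
    rw [show (c₁ + c₂) * (u₁ * u₂) = c₁ * u₁ * u₂ + c₂ * u₂ * u₁ by ring]
    exact add_mem (mul_mem hcu₁ hu₂) (mul_mem hcu₂ hu₁)
  | mul c₁ c₂ _ _ ih₁ ih₂ =>
    obtain ⟨u₁, hu₁, hu₁0, hcu₁⟩ := ih₁
    obtain ⟨u₂, hu₂, hu₂0, hcu₂⟩ := ih₂
    refine ⟨u₁ * u₂, mul_mem hu₁ hu₂, mul_ne_zero hu₁0 hu₂0, ?_⟩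
    rw [show c₁ * c₂ * (u₁ * u₂) = c₁ * u₁ * (c₂ * u₂) by ring]
    exact mul_mem hcu₁ hcu₂

theorem exists_mul_mem_of_mem_adjoin_simple {B : Subalgebra k K} {x : K} (hxB : x ∈ B)
    {l : K} (hl : l ∈ k⟮x⟯) : ∃ u ∈ B, u ≠ 0 ∧ l * u ∈ B := by
  have aeval_mem (p : k[X]) : aeval x p ∈ B :=
    coe_aeval_mk_apply (S := B) (p := p) x hxB ▸ SetLike.coe_mem _
  obtain ⟨f, g, rfl⟩ := (mem_adjoin_simple_iff k l).mp hl
  by_cases hg : aeval x g = 0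
  · exact ⟨1, one_mem B, one_ne_zero, by simp [hg]⟩
  · refine ⟨aeval x g, aeval_mem g, hg, ?_⟩
    rw [div_mul_cancel₀ _ hg]
    exact aeval_mem f

theorem isField_adjoin_of_krullDimLE_one (B : Subalgebra k K) [Algebra.FiniteType k B]
    [Ring.KrullDimLE 1 B] {x : K} (hxB : x ∈ B) (hx : Transcendental k x) :
    IsField (Algebra.adjoin k⟮x⟯ (B : Set K)) := by
  set C := Algebra.adjoin k⟮x⟯ (B : Set K)
  by_contra hC
  obtain ⟨P, hP0, hP⟩ := Ring.not_isField_iff_exists_prime.mp hC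
  let φ : B →+* C := B.val.toRingHom.codRestrict C fun b ↦ Algebra.subset_adjoin b.2
  have hp0 : P.comap φ ≠ ⊥ := by
    obtain ⟨c, hcP, hc0⟩ := Submodule.exists_mem_ne_zero_of_ne_bot hP0
    obtain ⟨u, huB, hu0, hcu⟩ :=
      exists_mul_mem_of_mem_adjoin (fun _ ↦ exists_mul_mem_of_mem_adjoin_simple hxB) c.2
    have hφ : φ ⟨c * u, hcu⟩ = c * φ ⟨u, huB⟩ := rfl
    refine (Submodule.ne_bot_iff _).mpr ⟨⟨c * u, hcu⟩, ?_, ?_⟩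
    · rw [Ideal.mem_comap, hφ]
      exact P.mul_mem_right _ hcP
    · exact fun h ↦ mul_ne_zero (Subtype.coe_ne_coe.mpr hc0) hu0 (congrArg Subtype.val h)
  have : (P.comap φ).IsMaximal := (Ideal.IsPrime.comap φ).isMaximal_of_ne_bot hp0
  obtain ⟨f, hf0, hfP⟩ := exists_aeval_mem_of_isMaximal (k := k) (P.comap φ) ⟨x, hxB⟩
  have hfx : aeval x f ∈ k⟮x⟯ :=
    algebra_adjoin_le_adjoin k {x} (aeval_mem_adjoin_singleton k x)
  have hφf : φ (aeval ⟨x, hxB⟩ f) = algebraMap k⟮x⟯ C ⟨aeval x f, hfx⟩ :=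
    Subtype.ext (coe_aeval_mk_apply (S := B) x hxB)
  refine hP.ne_top (Ideal.eq_top_of_isUnit_mem P hfP ?_)
  rw [hφf]
  exact (IsUnit.mk0 _ fun h ↦ hx ⟨f, hf0, congrArg Subtype.val h⟩).map _

theorem isAlgebraic_of_krullDimLE_one (B : Subalgebra k K) [Algebra.FiniteType k B]
    [Ring.KrullDimLE 1 B] {x z : K} (hxB : x ∈ B) (hzB : z ∈ B) (hx : Transcendental k x) :
    IsAlgebraic k⟮x⟯ z := by
  let C := Algebra.adjoin k⟮x⟯ (B : Set K)
  let := (isField_adjoin_of_krullDimLE_one B hxB hx).toField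
  have : Algebra.FiniteType k⟮x⟯ C := by
    obtain ⟨t, ht⟩ := (Subalgebra.fg_iff_finiteType B).mpr ‹_›
    refine (Subalgebra.fg_iff_finiteType C).mp ⟨t, ?_⟩
    rw [← Algebra.adjoin_adjoin_of_tower k, ht]
  have : Module.Finite k⟮x⟯ C := finite_of_finite_type_of_isJacobsonRing _ _
  exact ((Algebra.IsIntegral.isIntegral (R := k⟮x⟯)
    (⟨z, Algebra.subset_adjoin hzB⟩ : C)).map C.val).isAlgebraic

theorem isAlgebraic_adjoin_simple_of_krullDimLE_one {A : Type*} [CommRing A] [IsDomain A]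
    [Algebra k A] [Algebra.FiniteType k A] [Ring.KrullDimLE 1 A] [Algebra A K]
    [IsFractionRing A K] [IsScalarTower k A K] {x : K} (hx : Transcendental k x) :
    Algebra.IsAlgebraic k⟮x⟯ K := by
  refine ⟨fun z ↦ ?_⟩
  obtain ⟨a, b, hb, rfl⟩ := IsFractionRing.div_surjective (A := A) x
  obtain ⟨c, d, hd, rfl⟩ := IsFractionRing.div_surjective (A := A) z
  let M := Submonoid.powers (b * d)
  let B := Localization.subalgebra.ofField K M (Submonoid.powers_le.mpr (mul_mem hb hd))
  have : Algebra.FiniteType k B :=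
    .trans (S := A) ‹_› (IsLocalization.finiteType_of_monoid_fg M B)
  have : Algebra.FiniteType k (B.restrictScalars k) := this
  have : Ring.KrullDimLE 1 (B.restrictScalars k) := Ring.krullDimLE_iff.mpr <|
    (ringKrullDim_le_of_isLocalization M B).trans (Ring.krullDimLE_iff.mp ‹_›)
  have hbK := IsFractionRing.to_map_ne_zero_of_mem_nonZeroDivisors (K := K) hb
  have hdK := IsFractionRing.to_map_ne_zero_of_mem_nonZeroDivisors (K := K) hd
  refine isAlgebraic_of_krullDimLE_one (B.restrictScalars k)
    ⟨a * d, b * d, Submonoid.mem_powers _, ?_⟩ ⟨c * b, b * d, Submonoid.mem_powers _, ?_⟩ hx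
  all_goals simp only [map_mul]; field_simp

theorem exists_adjoin_pair_eq_top [CharZero k] [Algebra.EssFiniteType k K] (x : K)
    [Algebra.IsAlgebraic k⟮x⟯ K] : ∃ y : K, k⟮x, y⟯ = ⊤ := by
  have : Algebra.EssFiniteType k⟮x⟯ K := .of_comp k _ _
  have : FiniteDimensional k⟮x⟯ K := Algebra.finite_of_essFiniteType_of_isAlgebraic
  obtain ⟨y, hy⟩ := Field.exists_primitive_element k⟮x⟯ K
  refine ⟨y, ?_⟩
  rw [← Set.singleton_union, ← adjoin_adjoin_left, hy, restrictScalars_top]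

end

/-- For the fraction field `K` of the coordinate ring `A` of an irreducible algebraic curve
over a field `k` of characteristic zero: for every `x ∈ K` transcendental over `k`, the
extension `K / k⟮x⟯` is algebraic and there is `y ∈ K` with `K = k⟮x, y⟯`. -/
theorem curve_function_field_primitive_element
    (k : Type*) [Field k] [CharZero k]
    (A : Type*) [CommRing A] [IsDomain A] [Algebra k A] [Algebra.FiniteType k A]
    (hdim : ringKrullDim A = 1)
    (K : Type*) [Field K] [Algebra A K] [IsFractionRing A K]
    [Algebra k K] [IsScalarTower k A K]
    (x : K) (hx : Transcendental k x) :
    Algebra.IsAlgebraic (↥(IntermediateField.adjoin k {x})) K ∧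
      ∃ y : K, IntermediateField.adjoin k {x, y} = ⊤ := by
  have : Ring.KrullDimLE 1 A := Ring.krullDimLE_iff.mpr hdim.le
  have : Algebra.EssFiniteType A K := .of_isLocalization _ (nonZeroDivisors A)
  have : Algebra.EssFiniteType k K := .comp k A K
  have halg := isAlgebraic_adjoin_simple_of_krullDimLE_one (A := A) hx
  exact ⟨halg, exists_adjoin_pair_eq_top x⟩
end

section
/- Fix λ ∈ ℝ and let μ : ℝ³ → ℝ² be the map μ(a,b,c) = (a, b + λc). Let X₀ ⊆ ℝ³ and Y₀ ⊆ ℝ² with O = (0,0,0) ∉ X₀ and (0,0) ∉ Y₀, and assume μ maps X₀ onto Y₀ (μ '' X₀ = Y₀). Let τ : ℝ² → ℝ³ satisfy τ(μ(p)) = p for all p ∈ X₀, τ(w) ∈ X₀ for all w ∈ Y₀, and Tendsto τ (𝓝[Y₀] (0,0)) (𝓝 O). Then for every function q : ℝ³ → ℝ and every L ∈ ℝ: Tendsto q (𝓝[X₀] O) (𝓝 L) if and only if Tendsto (q ∘ τ) (𝓝[Y₀] (0,0)) (𝓝 L). -/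
open Filter Topology

/-!
The projection `μ` is continuous and maps `X₀` into `Y₀`, while `τ` tends to `O` along `Y₀` and
lands in `X₀`; so each map sends one punctured neighbourhood filter into the other. Since `τ ∘ μ`
is the identity on `X₀`, the filter `𝓝[X₀] O` is exactly the image of `𝓝[Y₀] (0,0)` under `τ`,
and a limit along an image filter is a limit of the composite.
-/

theorem Filter.map_eq_of_eventually_leftInverse {α β : Type*} {f : α → β} {g : β → α}
    {la : Filter α} {lb : Filter β} (hf : Tendsto f la lb) (hg : Tendsto g lb la)
    (hgf : g ∘ f =ᶠ[la] id) : map g lb = la :=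
  le_antisymm hg <|
    calc la = map (g ∘ f) la := by rw [map_congr hgf, map_id]
      _ = map g (map f la) := (map_map).symm
      _ ≤ map g lb := map_mono hf

theorem limit_along_space_curve_iff_plane_curve_general
    (lam : ℝ) (X₀ : Set (ℝ × ℝ × ℝ)) (Y₀ : Set (ℝ × ℝ))
    (himage : (fun p : ℝ × ℝ × ℝ => (p.1, p.2.1 + lam * p.2.2)) '' X₀ = Y₀)
    (τ : ℝ × ℝ → ℝ × ℝ × ℝ)
    (hτμ : ∀ p ∈ X₀, τ (p.1, p.2.1 + lam * p.2.2) = p)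
    (hτY : ∀ w ∈ Y₀, τ w ∈ X₀)
    (hτcont : Tendsto τ (𝓝[Y₀] ((0 : ℝ), (0 : ℝ))) (𝓝 ((0 : ℝ), (0 : ℝ), (0 : ℝ))))
    (q : ℝ × ℝ × ℝ → ℝ) (L : ℝ) :
    Tendsto q (𝓝[X₀] ((0 : ℝ), (0 : ℝ), (0 : ℝ))) (𝓝 L) ↔
      Tendsto (q ∘ τ) (𝓝[Y₀] ((0 : ℝ), (0 : ℝ))) (𝓝 L) := by
  set μ : ℝ × ℝ × ℝ → ℝ × ℝ := fun p => (p.1, p.2.1 + lam * p.2.2)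
  have hμ : Tendsto μ (𝓝[X₀] (0, 0, 0)) (𝓝[Y₀] (0, 0)) := by
    have hμcont : Continuous μ := by fun_prop
    simpa [μ] using (hμcont.continuousWithinAt (s := X₀) (x := (0, 0, 0))).tendsto_nhdsWithin
      (himage ▸ Set.mapsTo_image μ X₀)
  have hτ : Tendsto τ (𝓝[Y₀] (0, 0)) (𝓝[X₀] (0, 0, 0)) :=
    tendsto_nhdsWithin_iff.2 ⟨hτcont, eventually_nhdsWithin_of_forall hτY⟩
  rw [← map_eq_of_eventually_leftInverse hμ hτ (eventually_nhdsWithin_of_forall hτμ),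
    tendsto_map'_iff]

/-- Reduction of a limit along a (punctured) space curve `X₀` to a limit along a
birationally equivalent (punctured) plane curve `Y₀`, via the projection
`μ(a,b,c) = (a, b + λc)` and its rational inverse `τ`. -/
theorem limit_along_space_curve_iff_plane_curve
    (lam : ℝ) (X₀ : Set (ℝ × ℝ × ℝ)) (Y₀ : Set (ℝ × ℝ))
    (hX₀ : ((0 : ℝ), (0 : ℝ), (0 : ℝ)) ∉ X₀) (hY₀ : ((0 : ℝ), (0 : ℝ)) ∉ Y₀)
    (himage : (fun p : ℝ × ℝ × ℝ => (p.1, p.2.1 + lam * p.2.2)) '' X₀ = Y₀)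
    (τ : ℝ × ℝ → ℝ × ℝ × ℝ)
    (hτμ : ∀ p ∈ X₀, τ (p.1, p.2.1 + lam * p.2.2) = p)
    (hτY : ∀ w ∈ Y₀, τ w ∈ X₀)
    (hτcont : Tendsto τ (𝓝[Y₀] ((0 : ℝ), (0 : ℝ))) (𝓝 ((0 : ℝ), (0 : ℝ), (0 : ℝ))))
    (q : ℝ × ℝ × ℝ → ℝ) (L : ℝ) :
    Tendsto q (𝓝[X₀] ((0 : ℝ), (0 : ℝ), (0 : ℝ))) (𝓝 L) ↔
      Tendsto (q ∘ τ) (𝓝[Y₀] ((0 : ℝ), (0 : ℝ))) (𝓝 L) :=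
  limit_along_space_curve_iff_plane_curve_general lam X₀ Y₀ himage τ hτμ hτY hτcont q L
end

section
/- Let h ∈ ℝ[x,y,z] satisfy h(O) = 0 and ∇h(O) ≠ (0,0,0), where O = (0,0,0). Then there exists a point p ∈ ℝ³ with p ≠ O, h(p) = 0, ∇h(p) ≠ (0,0,0), and such that ∇h(p) is not a scalar multiple of p, i.e., for every λ ∈ ℝ one has ∇h(p) ≠ λ·p. -/
/-!
Near the origin the surface `{h = 0}` is a smooth graph over its tangent plane `∇h(O)^⊥`, so it
contains a curve `φ` with `φ 0 = O` whose velocity `u` is a nonzero tangent vector. For small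
`s ≠ 0` we have `φ s = s • slope φ 0 s` with `slope φ 0 s → u` and `∇h(φ s) → ∇h(O)`, hence
`φ s ⨯₃ ∇h(φ s) = s • (slope φ 0 s ⨯₃ ∇h(φ s))` is nonzero because `u ⨯₃ ∇h(O) ≠ 0`
(the two vectors are orthogonal and nonzero). A nonzero cross product rules out both vanishing
and proportionality.
-/

open MvPolynomial Filter Topology Matrix

theorem MvPolynomial.hasStrictFDerivAt_eval_s10 {σ : Type*} [Fintype σ] (p : MvPolynomial σ ℝ)
    (x : σ → ℝ) :
    HasStrictFDerivAt (fun v => eval v p)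
      (∑ i, eval x (pderiv i p) • (ContinuousLinearMap.proj i : (σ → ℝ) →L[ℝ] ℝ)) x := by
  classical
  induction p using MvPolynomial.induction_on with
  | C a =>
    simp only [eval_C, pderiv_C, map_zero, zero_smul, Finset.sum_const_zero]
    exact hasStrictFDerivAt_const a x
  | add p q hp hq =>
    simp only [map_add, add_smul, Finset.sum_add_distrib]
    exact hp.add hq
  | mul_X p i hp =>
    simp only [map_mul, eval_X]
    refine (hp.mul (ContinuousLinearMap.proj i).hasStrictFDerivAt).congr_fderiv ?_
    ext v
    simp [Pi.single_apply, apply_ite (eval x), mul_add, Finset.sum_add_distrib, Finset.mul_sum,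
      mul_left_comm, mul_comm]

theorem HasStrictFDerivAt.exists_curve_tangent_in_fiber {𝕜 E F : Type*}
    [NontriviallyNormedField 𝕜] [CompleteSpace 𝕜] [NormedAddCommGroup E] [NormedSpace 𝕜 E]
    [CompleteSpace E] [NormedAddCommGroup F] [NormedSpace 𝕜 F] [FiniteDimensional 𝕜 F]
    {f : E → F} {f' : E →L[𝕜] F} {a : E} (hf : HasStrictFDerivAt f f' a) (hf' : f'.range = ⊤)
    {u : E} (hu : f' u = 0) :
    ∃ φ : 𝕜 → E, φ 0 = a ∧ HasDerivAt φ u 0 ∧ ∀ᶠ s in 𝓝 0, f (φ s) = f a := by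
  let u' : f'.ker := ⟨u, hu⟩
  have hline : HasDerivAt (fun s : 𝕜 => s • u') u' 0 := by
    simpa using (hasDerivAt_id (0 : 𝕜)).smul_const u'
  have hfiber : Tendsto (fun s : 𝕜 => (f a, s • u')) (𝓝 0) (𝓝 (f a, 0)) := by
    simpa using tendsto_const_nhds.prodMk_nhds hline.continuousAt.tendsto
  refine ⟨fun s => hf.implicitFunction f f' hf' (f a) (s • u'), by simp, ?_,
    hfiber.eventually (hf.map_implicitFunction_eq hf')⟩
  exact (hf.to_implicitFunction hf').hasFDerivAt.comp_hasDerivAt_of_eq 0 hline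
    (zero_smul 𝕜 u').symm

theorem MvPolynomial.exists_curve_tangent_in_level_set {σ : Type*} [Fintype σ]
    {p : MvPolynomial σ ℝ} {x : σ → ℝ} (hx : (fun i => eval x (pderiv i p)) ≠ 0) {u : σ → ℝ}
    (hu : (fun i => eval x (pderiv i p)) ⬝ᵥ u = 0) :
    ∃ φ : ℝ → σ → ℝ, φ 0 = x ∧ HasDerivAt φ u 0 ∧ ∀ᶠ s in 𝓝 0, eval (φ s) p = eval x p := by
  classical
  have hf := p.hasStrictFDerivAt_eval_s10 x
  set f' := ∑ i, eval x (pderiv i p) • (ContinuousLinearMap.proj i : (σ → ℝ) →L[ℝ] ℝ)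
  have hf'_apply (v : σ → ℝ) : f' v = (fun i => eval x (pderiv i p)) ⬝ᵥ v := by
    simp [f', dotProduct]
  have hf'_ne : (f' : (σ → ℝ) →ₗ[ℝ] ℝ) ≠ 0 := by
    refine fun h0 => hx ?_
    ext i
    simpa [hf'_apply] using LinearMap.congr_fun h0 (Pi.single i 1)
  exact hf.exists_curve_tangent_in_fiber (Module.Dual.range_eq_top_of_ne_zero hf'_ne)
    ((hf'_apply u).trans hu)

theorem Filter.Tendsto.cross {α R : Type*} [CommRing R] [TopologicalSpace R]
    [IsTopologicalRing R] {l : Filter α} {f g : α → Fin 3 → R} {a b : Fin 3 → R}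
    (hf : Tendsto f l (𝓝 a)) (hg : Tendsto g l (𝓝 b)) :
    Tendsto (fun x => f x ⨯₃ g x) l (𝓝 (a ⨯₃ b)) := by
  have hcont : Continuous fun v : (Fin 3 → R) × (Fin 3 → R) => v.1 ⨯₃ v.2 := by
    refine continuous_pi fun i => ?_
    fin_cases i <;> simp only [cross_apply] <;> fun_prop
  have h := (hcont.tendsto (a, b)).comp (hf.prodMk_nhds hg)
  exact h

theorem cross_ne_zero_of_dotProduct_eq_zero {R : Type*} [CommRing R] [LinearOrder R]
    [IsStrictOrderedRing R] {u v : Fin 3 → R} (hu : u ≠ 0) (hv : v ≠ 0) (huv : u ⬝ᵥ v = 0) :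
    u ⨯₃ v ≠ 0 := by
  intro h
  have := cross_dot_cross u v u v
  rw [h, zero_dotProduct, huv, dotProduct_comm v u, huv, mul_zero, sub_zero, eq_comm,
    mul_eq_zero, dotProduct_self_eq_zero, dotProduct_self_eq_zero] at this
  tauto

theorem ne_zero_and_ne_smul_of_cross_ne_zero {R : Type*} [CommRing R] {v w : Fin 3 → R}
    (h : v ⨯₃ w ≠ 0) : v ≠ 0 ∧ w ≠ 0 ∧ ∀ c : R, w ≠ c • v := by
  refine ⟨?_, ?_, fun c hc => ?_⟩
  · rintro rfl; simp at h
  · rintro rfl; simp at h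
  · simp [hc, cross_self] at h

theorem eventually_cross_ne_zero_of_hasDerivAt {𝕜 : Type*} [NontriviallyNormedField 𝕜]
    {φ G : 𝕜 → Fin 3 → 𝕜} {u g : Fin 3 → 𝕜} (hφ0 : φ 0 = 0) (hφ : HasDerivAt φ u 0)
    (hG : Tendsto G (𝓝[≠] 0) (𝓝 g)) (hug : u ⨯₃ g ≠ 0) :
    ∀ᶠ s in 𝓝[≠] 0, φ s ⨯₃ G s ≠ 0 := by
  have hslope := (hasDerivAt_iff_tendsto_slope.mp hφ).cross hG
  filter_upwards [hslope.eventually_ne hug, self_mem_nhdsWithin] with s hs (hs0 : s ≠ 0)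
  have hφs : φ s = s • slope φ 0 s := by simpa [hφ0] using (sub_smul_slope φ 0 s).symm
  rw [hφs, map_smul, LinearMap.smul_apply]
  exact smul_ne_zero hs0 hs

/-- If the surface `{h = 0}` is nonsingular at the origin, then it has a regular real point
`p ≠ O` whose gradient `∇h(p)` is not a scalar multiple of `p`. -/
theorem exists_regular_point_gradient_not_radial (h : MvPolynomial (Fin 3) ℝ)
    (h0 : eval (0 : Fin 3 → ℝ) h = 0)
    (hgrad : (fun i => eval (0 : Fin 3 → ℝ) (pderiv i h)) ≠ (0 : Fin 3 → ℝ)) :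
    ∃ p : Fin 3 → ℝ, p ≠ 0 ∧ eval p h = 0 ∧
      (fun i => eval p (pderiv i h)) ≠ (0 : Fin 3 → ℝ) ∧
      ∀ lam : ℝ, (fun i => eval p (pderiv i h)) ≠ lam • p := by
  set g : Fin 3 → ℝ := fun i => eval 0 (pderiv i h)
  obtain ⟨u, hu0, hug⟩ := exists_ne_zero_dotProduct_eq_zero g
  obtain ⟨φ, hφ0, hφ, hφh⟩ :=
    exists_curve_tangent_in_level_set hgrad ((dotProduct_comm g u).trans hug)
  have hG : Tendsto (fun s i => eval (φ s) (pderiv i h)) (𝓝 0) (𝓝 g) :=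
    tendsto_pi_nhds.mpr fun i => by
      have := (continuous_eval (pderiv i h)).continuousAt.tendsto.comp hφ.continuousAt
      rwa [hφ0] at this
  have hcross := eventually_cross_ne_zero_of_hasDerivAt hφ0 hφ (hG.mono_left nhdsWithin_le_nhds)
    (cross_ne_zero_of_dotProduct_eq_zero hu0 hgrad hug)
  obtain ⟨s, hs, hsc⟩ := ((hφh.filter_mono nhdsWithin_le_nhds).and hcross).exists
  obtain ⟨hφs, hGs, hGφs⟩ := ne_zero_and_ne_smul_of_cross_ne_zero hsc
  exact ⟨φ s, hφs, hs.trans h0, hGs, hGφs⟩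
end

section
/- Let p = (a, b, c) ∈ ℝ³ with a ≠ 0, b ≠ 0, and c ≠ 0, and let w ∈ ℝ³ be a vector that is not a scalar multiple of p. Then there exist real constants A, B, C > 0 such that the determinant of the 3×3 matrix with rows (A·a, B·b, C·c), (a, b, c), and w is nonzero. -/
/-!
The determinant is linear in `(A, B, C)`: it equals `(A, B, C) ⬝ᵥ (p ⊙ (p × w))`. Since `w` is not
parallel to `p`, the cross product `p × w` is nonzero, and since no coordinate of `p` vanishes, so is
`p ⊙ (p × w)`. Finally, a nonzero vector has nonzero dot product with `(1, 1, 1)` or, failing that,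
with `(1, 1, 1) + eᵢ` for any coordinate `i` where it does not vanish.
-/

open Matrix

theorem exists_pos_dotProduct_ne_zero {K ι : Type*} [Field K] [LinearOrder K]
    [IsStrictOrderedRing K] [Fintype ι] [DecidableEq ι] {v : ι → K} (hv : v ≠ 0) :
    ∃ u : ι → K, (∀ i, 0 < u i) ∧ u ⬝ᵥ v ≠ 0 := by
  by_cases hsum : 1 ⬝ᵥ v = 0
  · obtain ⟨i, hi⟩ := Function.ne_iff.mp hv
    refine ⟨1 + Pi.single i 1, fun j => ?_, ?_⟩
    · exact add_pos_of_pos_of_nonneg one_pos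
        ((Pi.single_nonneg (α := fun _ => K)).mpr zero_le_one j)
    · simpa [add_dotProduct, hsum] using hi
  · exact ⟨1, fun _ => one_pos, hsum⟩

theorem det_scale_row_eq_dotProduct {R : Type*} [CommRing R] (u p w : Fin 3 → R) :
    det !![u 0 * p 0, u 1 * p 1, u 2 * p 2; p 0, p 1, p 2; w 0, w 1, w 2] =
      u ⬝ᵥ (p * p ⨯₃ w) := by
  simp only [det_fin_three, of_apply, cons_val', cons_val_zero, cons_val_fin_one, cons_val_one,
    cons_val, dotProduct, cross_apply, Pi.mul_apply, Fin.sum_univ_three]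
  ring

theorem mul_cross_ne_zero {K : Type*} [Field K] {p w : Fin 3 → K} (hp : ∀ i, p i ≠ 0)
    (hw : ∀ t : K, w ≠ t • p) : p * p ⨯₃ w ≠ 0 := by
  have hp0 : p ≠ 0 := fun h => hp 0 (by simp [h])
  have hcross : p ⨯₃ w ≠ 0 := crossProduct_ne_zero_iff_linearIndependent.mpr
    ((LinearIndependent.pair_iff' hp0).mpr fun t => (hw t).symm)
  obtain ⟨i, hi⟩ := Function.ne_iff.mp hcross
  exact Function.ne_iff.mpr ⟨i, mul_ne_zero (hp i) hi⟩

/-- Linear algebra step: if `p = (a,b,c)` has all coordinates nonzero and `w` is not a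
scalar multiple of `p`, then there are positive constants `A, B, C` such that the
determinant with rows `(Aa, Bb, Cc)`, `(a,b,c)`, `w` is nonzero. -/
theorem exists_pos_constants_det_ne_zero (a b c : ℝ) (ha : a ≠ 0) (hb : b ≠ 0) (hc : c ≠ 0)
    (w : Fin 3 → ℝ) (hw : ∀ t : ℝ, w ≠ t • ![a, b, c]) :
    ∃ A B C : ℝ, 0 < A ∧ 0 < B ∧ 0 < C ∧
      Matrix.det !![A * a, B * b, C * c; a, b, c; w 0, w 1, w 2] ≠ 0 := by
  have hp : ∀ i, ![a, b, c] i ≠ 0 := by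
    intro i; fin_cases i <;> assumption
  obtain ⟨u, hu, hdot⟩ := exists_pos_dotProduct_ne_zero (mul_cross_ne_zero hp hw)
  refine ⟨u 0, u 1, u 2, hu 0, hu 1, hu 2, ?_⟩
  rwa [← det_scale_row_eq_dotProduct] at hdot
end
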